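/- Let J, K : ℝ² → M₂(ℂ) (coordinates denoted (z, z̃)) be smooth, with det J(z, z̃) = 1 for all (z, z̃) and with the (2,2)-entry J₂₂ nowhere zero, and suppose they satisfy the Miura system with σ₃ replaced by P₁ = diag(1, 0): ∂_z J = −[K, P₁]J and ∂_{z̃}K = −[J, P₁]J⁻¹. Define u = K₂₁ and v = i·J₁₂/J₂₂. Then (u, v) solves the pKN(−1) system directly in the coordinates (x, t) = (z̃, z); that is, ∂_z∂_{z̃}u − u − 2i·u·v·∂_{z̃}u = 0 and ∂_z∂_{z̃}v − v + 2i·v·u·∂_{z̃}v = 0. -/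

import Mathlib

open Matrix

/-- Partial derivative with respect to the first coordinate `z`. -/
noncomputable def pdz (f : ℝ × ℝ → ℂ) (p : ℝ × ℝ) : ℂ :=
  deriv (fun s => f (s, p.2)) p.1

/-- Partial derivative with respect to the second coordinate `z̃`. -/
noncomputable def pdzt (f : ℝ × ℝ → ℂ) (p : ℝ × ℝ) : ℂ :=
  deriv (fun s => f (p.1, s)) p.2

/-- Entrywise `∂_z` of a matrix-valued function. -/
noncomputable def pdzM (J : ℝ × ℝ → Matrix (Fin 2) (Fin 2) ℂ) (p : ℝ × ℝ) :
    Matrix (Fin 2) (Fin 2) ℂ :=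
  Matrix.of fun i j => pdz (fun q => J q i j) p

/-- Entrywise `∂_z̃` of a matrix-valued function. -/
noncomputable def pdztM (J : ℝ × ℝ → Matrix (Fin 2) (Fin 2) ℂ) (p : ℝ × ℝ) :
    Matrix (Fin 2) (Fin 2) ℂ :=
  Matrix.of fun i j => pdzt (fun q => J q i j) p

/-- The matrix `P₁ = diag(1, 0)`. -/
def P1 : Matrix (Fin 2) (Fin 2) ℂ := !![1, 0; 0, 0]

section Aux

lemma slice1 {f : ℝ × ℝ → ℂ} (hf : ContDiff ℝ (⊤ : ℕ∞) f) (y : ℝ) :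
    ContDiff ℝ (⊤ : ℕ∞) fun s => f (s, y) := hf.comp (contDiff_id.prodMk contDiff_const)

lemma slice2 {f : ℝ × ℝ → ℂ} (hf : ContDiff ℝ (⊤ : ℕ∞) f) (x : ℝ) :
    ContDiff ℝ (⊤ : ℕ∞) fun s => f (x, s) := hf.comp (contDiff_const.prodMk contDiff_id)

lemma hasDeriv_pdz {f : ℝ × ℝ → ℂ} (hf : ContDiff ℝ (⊤ : ℕ∞) f) (p : ℝ × ℝ) :
    HasDerivAt (fun s => f (s, p.2)) (pdz f p) p.1 :=
  (((slice1 hf p.2).differentiable (by simp)) p.1).hasDerivAt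

lemma hasDeriv_pdzt {f : ℝ × ℝ → ℂ} (hf : ContDiff ℝ (⊤ : ℕ∞) f) (p : ℝ × ℝ) :
    HasDerivAt (fun s => f (p.1, s)) (pdzt f p) p.2 :=
  (((slice2 hf p.1).differentiable (by simp)) p.2).hasDerivAt

lemma pdz_fderiv {f : ℝ × ℝ → ℂ} (hf : Differentiable ℝ f) (p : ℝ × ℝ) :
    pdz f p = fderiv ℝ f p (1, 0) := by
  have h2 : HasDerivAt (fun s : ℝ => (s, p.2)) ((1:ℝ), (0:ℝ)) p.1 :=
    (hasDerivAt_id p.1).prodMk (hasDerivAt_const p.1 p.2)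
  have h := (hf (p.1, p.2)).hasFDerivAt.comp_hasDerivAt p.1 h2
  simpa [pdz, Function.comp_def] using h.deriv

lemma pdzt_fderiv {f : ℝ × ℝ → ℂ} (hf : Differentiable ℝ f) (p : ℝ × ℝ) :
    pdzt f p = fderiv ℝ f p (0, 1) := by
  have h2 : HasDerivAt (fun s : ℝ => (p.1, s)) ((0:ℝ), (1:ℝ)) p.2 :=
    (hasDerivAt_const p.2 p.1).prodMk (hasDerivAt_id p.2)
  have h := (hf (p.1, p.2)).hasFDerivAt.comp_hasDerivAt p.2 h2
  simpa [pdzt, Function.comp_def] using h.deriv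

lemma pdz_pdzt_comm {f : ℝ × ℝ → ℂ} (hf : ContDiff ℝ (⊤ : ℕ∞) f) (p : ℝ × ℝ) :
    pdz (fun q => pdzt f q) p = pdzt (fun q => pdz f q) p := by
  have hdf : Differentiable ℝ f := hf.differentiable (by simp)
  have hF' : Differentiable ℝ (fderiv ℝ f) :=
    (hf.fderiv_right (m := 1) (WithTop.coe_le_coe.mpr le_top)).differentiable one_ne_zero
  have e1 : (fun q => pdzt f q)
      = fun q => ContinuousLinearMap.apply ℝ ℂ (((0:ℝ),(1:ℝ))) (fderiv ℝ f q) :=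
    funext fun q => pdzt_fderiv hdf q
  have e2 : (fun q => pdz f q)
      = fun q => ContinuousLinearMap.apply ℝ ℂ (((1:ℝ),(0:ℝ))) (fderiv ℝ f q) :=
    funext fun q => pdz_fderiv hdf q
  have g1 : Differentiable ℝ fun q =>
      ContinuousLinearMap.apply ℝ ℂ (((0:ℝ),(1:ℝ))) (fderiv ℝ f q) :=
    (ContinuousLinearMap.apply ℝ ℂ (((0:ℝ),(1:ℝ)))).differentiable.comp hF'
  have g2 : Differentiable ℝ fun q =>
      ContinuousLinearMap.apply ℝ ℂ (((1:ℝ),(0:ℝ))) (fderiv ℝ f q) :=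
    (ContinuousLinearMap.apply ℝ ℂ (((1:ℝ),(0:ℝ)))).differentiable.comp hF'
  rw [e1, e2, pdz_fderiv g1 p, pdzt_fderiv g2 p]
  have c1 : fderiv ℝ (fun q => ContinuousLinearMap.apply ℝ ℂ (((0:ℝ),(1:ℝ))) (fderiv ℝ f q)) p
      = (ContinuousLinearMap.apply ℝ ℂ (((0:ℝ),(1:ℝ)))).comp (fderiv ℝ (fderiv ℝ f) p) :=
    ((ContinuousLinearMap.apply ℝ ℂ (((0:ℝ),(1:ℝ)))).hasFDerivAt.comp p (hF' p).hasFDerivAt).fderiv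
  have c2 : fderiv ℝ (fun q => ContinuousLinearMap.apply ℝ ℂ (((1:ℝ),(0:ℝ))) (fderiv ℝ f q)) p
      = (ContinuousLinearMap.apply ℝ ℂ (((1:ℝ),(0:ℝ)))).comp (fderiv ℝ (fderiv ℝ f) p) :=
    ((ContinuousLinearMap.apply ℝ ℂ (((1:ℝ),(0:ℝ)))).hasFDerivAt.comp p (hF' p).hasFDerivAt).fderiv
  rw [c1, c2]
  simpa using second_derivative_symmetric (fun y => (hdf y).hasFDerivAt)
    (hF' p).hasFDerivAt ((1:ℝ),(0:ℝ)) ((0:ℝ),(1:ℝ))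

end Aux

/-- from the Miura system with `σ₃` replaced by `P₁ = diag(1,0)`,
`∂_z J = −[K,P₁]J`, `∂_z̃ K = −[J,P₁]J⁻¹`, with `det J = 1` and `J₂₂ ≠ 0`, the pair
`u = K₂₁`, `v = i·J₁₂/J₂₂` solves the pKN(−1) system directly in coordinates
`(x,t) = (z̃, z)`: `∂_z∂_z̃ u − u − 2i·u·v·∂_z̃ u = 0` and `∂_z∂_z̃ v − v + 2i·v·u·∂_z̃ v = 0`. -/
theorem pKN_from_P1_miura
    (J K : ℝ × ℝ → Matrix (Fin 2) (Fin 2) ℂ)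
    (hJ : ∀ i j, ContDiff ℝ (⊤ : ℕ∞) fun p => J p i j)
    (hK : ∀ i j, ContDiff ℝ (⊤ : ℕ∞) fun p => K p i j)
    (hdet : ∀ p, (J p).det = 1)
    (hJ22 : ∀ p, J p 1 1 ≠ 0)
    (hMiura1 : ∀ p, pdzM J p = -((K p * P1 - P1 * K p) * J p))
    (hMiura2 : ∀ p, pdztM K p = -((J p * P1 - P1 * J p) * (J p)⁻¹))
    (u v : ℝ × ℝ → ℂ)
    (hu : u = fun p => K p 1 0)
    (hv : v = fun p => Complex.I * J p 0 1 / J p 1 1) :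
    ∀ p, pdz (fun q => pdzt u q) p - u p - 2 * Complex.I * u p * v p * pdzt u p = 0 ∧
         pdz (fun q => pdzt v q) p - v p + 2 * Complex.I * v p * u p * pdzt v p = 0 := by
  subst hu hv
  have hJinv : ∀ p, (J p)⁻¹ = !![J p 1 1, -(J p 0 1); -(J p 1 0), J p 0 0] := by
    intro p
    rw [Matrix.inv_def, hdet, Matrix.adjugate_fin_two]
    simp
  have hzb : ∀ q, pdz (fun r => J r 0 1) q = K q 0 1 * J q 1 1 := by
    intro q
    have h : pdzM J q 0 1 = (-((K q * P1 - P1 * K q) * J q)) 0 1 := by rw [hMiura1 q]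
    simp [pdzM, P1, Matrix.mul_apply, Fin.sum_univ_two, Matrix.vecMul, dotProduct] at h
    linear_combination h
  have hzc : ∀ q, pdz (fun r => J r 1 0) q = -(K q 1 0 * J q 0 0) := by
    intro q
    have h : pdzM J q 1 0 = (-((K q * P1 - P1 * K q) * J q)) 1 0 := by rw [hMiura1 q]
    simp [pdzM, P1, Matrix.mul_apply, Fin.sum_univ_two, Matrix.vecMul, dotProduct] at h
    linear_combination h
  have hzd : ∀ q, pdz (fun r => J r 1 1) q = -(K q 1 0 * J q 0 1) := by
    intro q
    have h : pdzM J q 1 1 = (-((K q * P1 - P1 * K q) * J q)) 1 1 := by rw [hMiura1 q]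
    simp [pdzM, P1, Matrix.mul_apply, Fin.sum_univ_two, Matrix.vecMul, dotProduct] at h
    linear_combination h
  have hztk12 : ∀ q, pdzt (fun r => K r 0 1) q = J q 0 0 * J q 0 1 := by
    intro q
    have h : pdztM K q 0 1 = (-((J q * P1 - P1 * J q) * (J q)⁻¹)) 0 1 := by rw [hMiura2 q]
    rw [hJinv q] at h
    simp [pdztM, P1, Matrix.mul_apply, Fin.sum_univ_two, Matrix.vecMul, dotProduct] at h
    linear_combination h
  have hztk21 : ∀ q, pdzt (fun r => K r 1 0) q = -(J q 1 0 * J q 1 1) := by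
    intro q
    have h : pdztM K q 1 0 = (-((J q * P1 - P1 * J q) * (J q)⁻¹)) 1 0 := by rw [hMiura2 q]
    rw [hJinv q] at h
    simp [pdztM, P1, Matrix.mul_apply, Fin.sum_univ_two, Matrix.vecMul, dotProduct] at h
    linear_combination h
  have hdet' : ∀ q, J q 0 0 * J q 1 1 - J q 0 1 * J q 1 0 = 1 := by
    intro q; simpa [Matrix.det_fin_two] using hdet q
  intro p
  constructor
  · -- first pKN equation
    have h1 : pdz (fun q => pdzt (fun r => K r 1 0) q) p
        = -(pdz (fun r => J r 1 0) p * J p 1 1 + J p 1 0 * pdz (fun r => J r 1 1) p) := by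
      have e : (fun q => pdzt (fun r => K r 1 0) q) = fun q => -(J q 1 0 * J q 1 1) :=
        funext hztk21
      rw [e]
      exact (((hasDeriv_pdz (hJ 1 0) p).mul (hasDeriv_pdz (hJ 1 1) p)).neg).deriv
    rw [h1, hztk21 p, hzc p, hzd p]
    have hd := hdet' p
    have h22 := hJ22 p
    field_simp
    linear_combination (K p 1 0) * hd
      + (2 * K p 1 0 * J p 1 0 * J p 0 1) * Complex.I_sq
  · -- second pKN equation
    have hvCD : ContDiff ℝ (⊤ : ℕ∞) (fun q : ℝ × ℝ => Complex.I * J q 0 1 / J q 1 1) := by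
      simp only [div_eq_mul_inv]
      exact (contDiff_const.mul (hJ 0 1)).mul ((hJ 1 1).inv hJ22)
    have hcomm := pdz_pdzt_comm hvCD p
    have hpdzv : (fun q => pdz (fun r => Complex.I * J r 0 1 / J r 1 1) q)
        = fun q => Complex.I * ((K q 0 1 * (J q 1 1 * J q 1 1)
            + K q 1 0 * (J q 0 1 * J q 0 1)) / (J q 1 1 * J q 1 1)) := by
      funext q
      have h : pdz (fun r => Complex.I * J r 0 1 / J r 1 1) q
          = (Complex.I * pdz (fun r => J r 0 1) q * J q 1 1
              - Complex.I * J q 0 1 * pdz (fun r => J r 1 1) q) / J q 1 1 ^ 2 :=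
        (((hasDeriv_pdz (hJ 0 1) q).const_mul Complex.I).div
          (hasDeriv_pdz (hJ 1 1) q) (hJ22 q)).deriv
      rw [h, hzb q, hzd q]
      field_simp
      ring
    have hDb := hasDeriv_pdzt (hJ 0 1) p
    have hDd := hasDeriv_pdzt (hJ 1 1) p
    have hDk12 := hasDeriv_pdzt (hK 0 1) p
    have hDk21 := hasDeriv_pdzt (hK 1 0) p
    have hE := ((((hDk12.mul (hDd.mul hDd)).add (hDk21.mul (hDb.mul hDb))).div
        (hDd.mul hDd) (mul_ne_zero (hJ22 p) (hJ22 p))).const_mul Complex.I)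
    have hpdztv : pdzt (fun r => Complex.I * J r 0 1 / J r 1 1) p
        = (Complex.I * pdzt (fun r => J r 0 1) p * J p 1 1
            - Complex.I * J p 0 1 * pdzt (fun r => J r 1 1) p) / J p 1 1 ^ 2 :=
      (((hasDeriv_pdzt (hJ 0 1) p).const_mul Complex.I).div
        (hasDeriv_pdzt (hJ 1 1) p) (hJ22 p)).deriv
    rw [hcomm, hpdzv, hpdztv]
    have h2 := hE.deriv
    rw [show pdzt (fun q => Complex.I * ((K q 0 1 * (J q 1 1 * J q 1 1)
            + K q 1 0 * (J q 0 1 * J q 0 1)) / (J q 1 1 * J q 1 1))) p = _ from h2]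
    rw [hztk12 p, hztk21 p]
    have hd := hdet' p
    have h22 := hJ22 p
    simp only [Pi.mul_apply, Pi.add_apply, Prod.mk.eta]
    field_simp
    linear_combination (Complex.I * J p 0 1 * J p 1 1 ^ 2) * hd
      + (2 * Complex.I * J p 0 1 * J p 1 1 * K p 1 0 * pdzt (fun r => J r 0 1) p
        - 2 * Complex.I * J p 0 1 ^ 2 * K p 1 0 * pdzt (fun r => J r 1 1) p)
        * Complex.I_sq
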